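/- Let D be a definition and M₀ a structure interpreting the parameter symbols param(D). The immediate consequence operator T_D — mapping each tuple of interpretations of the defined predicates over the universe of M₀ to the tuple collecting, for each defined predicate p, all tuples d such that some rule of D with head p(t₁,…,tₖ) has a variable assignment making its body true (evaluating parameters in M₀ and defined predicates in the given tuple) and making (t₁,…,tₖ) evaluate to d — is monotone with respect to componentwise inclusion, and its least fixed point is exactly the tuple of interpretations of the defined predicates in the unique expansion of M₀ that satisfies D as a definition. -/

import Mathlib

/-- Terms over function symbols `Func` (with arities `arF`) and variables `V`. -/
inductive Term (Func : Type) (arF : Func → ℕ) (V : Type) : Type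
  | var : V → Term Func arF V
  | func : (f : Func) → (Fin (arF f) → Term Func arF V) → Term Func arF V

/-
The vocabulary `Σ` of a definition `D` consists of:
* function symbols `Func` with arities `arF` (parameters of `D`),
* parameter predicate symbols `PP` with arities `arPP` (parameters of `D`),
* defined predicate symbols `DP` with arities `arDP` (the predicates defined by `D`).
-/
variable {Func : Type} {arF : Func → ℕ} {PP : Type} {arPP : PP → ℕ}
  {DP : Type} {arDP : DP → ℕ}

/-- A body atom of a definitional rule: an atomic formula (over a defined or a parameter
predicate), `⊤`, `⊥`, or an equality/disequality atom between terms. -/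
inductive BodyAtom (Func : Type) (arF : Func → ℕ) (PP : Type) (arPP : PP → ℕ)
    (DP : Type) (arDP : DP → ℕ) (V : Type) : Type
  | defAtom : (p : DP) → (Fin (arDP p) → Term Func arF V) → BodyAtom Func arF PP arPP DP arDP V
  | parAtom : (q : PP) → (Fin (arPP q) → Term Func arF V) → BodyAtom Func arF PP arPP DP arDP V
  | verum : BodyAtom Func arF PP arPP DP arDP V
  | falsum : BodyAtom Func arF PP arPP DP arDP V
  | eq : Term Func arF V → Term Func arF V → BodyAtom Func arF PP arPP DP arDP V
  | neq : Term Func arF V → Term Func arF V → BodyAtom Func arF PP arPP DP arDP V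

/-- A definitional rule `A ← B₁, …, Bₙ`: the head `A` is an atomic formula whose
predicate is a defined predicate, the body is a list of body atoms; all variables
(natural numbers) are implicitly universally quantified in front of the rule. -/
structure Rule (Func : Type) (arF : Func → ℕ) (PP : Type) (arPP : PP → ℕ)
    (DP : Type) (arDP : DP → ℕ) : Type where
  headPred : DP
  headArgs : Fin (arDP headPred) → Term Func arF ℕ
  body : List (BodyAtom Func arF PP arPP DP arDP ℕ)

/-- A first-order structure interpreting the whole vocabulary `Σ`. -/
structure Struc (Func : Type) (arF : Func → ℕ) (PP : Type) (arPP : PP → ℕ)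
    (DP : Type) (arDP : DP → ℕ) : Type 1 where
  carrier : Type
  nonempty : Nonempty carrier
  interpF : (f : Func) → (Fin (arF f) → carrier) → carrier
  interpPP : (q : PP) → (Fin (arPP q) → carrier) → Prop
  interpDP : (p : DP) → (Fin (arDP p) → carrier) → Prop

/-- Evaluation of a term in a structure under a variable assignment. -/
def Term.eval (M : Struc Func arF PP arPP DP arDP) {V : Type} (σ : V → M.carrier) :
    Term Func arF V → M.carrier
  | .var v => σ v
  | .func f args => M.interpF f fun i => (args i).eval M σ

/-- Truth of a body atom in a structure under an assignment. -/
def BodyAtom.holds (M : Struc Func arF PP arPP DP arDP) {V : Type} (σ : V → M.carrier) :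
    BodyAtom Func arF PP arPP DP arDP V → Prop
  | .defAtom p args => M.interpDP p fun i => (args i).eval M σ
  | .parAtom q args => M.interpPP q fun i => (args i).eval M σ
  | .verum => True
  | .falsum => False
  | .eq s t => s.eval M σ = t.eval M σ
  | .neq s t => s.eval M σ ≠ t.eval M σ

/-- A structure satisfies a rule as a first-order implication: the universal closure of
`B₁ ∧ ⋯ ∧ Bₙ → A`. -/
def Rule.holds (M : Struc Func arF PP arPP DP arDP)
    (r : Rule Func arF PP arPP DP arDP) : Prop :=
  ∀ σ : ℕ → M.carrier, (∀ b ∈ r.body, b.holds M σ) →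
    M.interpDP r.headPred fun i => (r.headArgs i).eval M σ

/-- `M` satisfies all rules of the definition `D` as first-order implications. -/
def SatRules (M : Struc Func arF PP arPP DP arDP)
    (D : Set (Rule Func arF PP arPP DP arDP)) : Prop :=
  ∀ r ∈ D, r.holds M

/-- `M` satisfies `D` as a definition (`M ⊨_D D`): `M` satisfies every rule of `D` as a
first-order implication, and for every structure `N` with the same universe and the same
interpretations of all parameter symbols (function symbols and parameter predicates)
that satisfies every rule of `D` as an implication, `p^M ⊆ p^N` for every defined
predicate `p`. -/
def SatDef (D : Set (Rule Func arF PP arPP DP arDP))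
    (M : Struc Func arF PP arPP DP arDP) : Prop :=
  SatRules M D ∧
    ∀ IDP : (p : DP) → (Fin (arDP p) → M.carrier) → Prop,
      SatRules ⟨M.carrier, M.nonempty, M.interpF, M.interpPP, IDP⟩ D →
        ∀ p args, M.interpDP p args → IDP p args

/-- A structure interpreting exactly the parameter symbols `param(D)`: the function
symbols and the parameter predicates. -/
structure PStruc (Func : Type) (arF : Func → ℕ) (PP : Type) (arPP : PP → ℕ) : Type 1 where
  carrier : Type
  nonempty : Nonempty carrier
  interpF : (f : Func) → (Fin (arF f) → carrier) → carrier
  interpPP : (q : PP) → (Fin (arPP q) → carrier) → Prop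

/-- The expansion of a parameter structure `M₀` by an interpretation `I` of the defined
predicates: same universe, agreeing with `M₀` on all symbols `M₀` interprets. -/
def PStruc.expand (M₀ : PStruc Func arF PP arPP)
    (I : (p : DP) → (Fin (arDP p) → M₀.carrier) → Prop) :
    Struc Func arF PP arPP DP arDP :=
  ⟨M₀.carrier, M₀.nonempty, M₀.interpF, M₀.interpPP, I⟩

/-- The immediate consequence operator `T_D` of the definition `D` in the context of the
parameter structure `M₀`: it maps a tuple `I` of interpretations of the defined
predicates to the tuple collecting, for each defined predicate `p`, all tuples `d` such
that some rule of `D` with head `p(t₁,…,tₖ)` has a variable assignment making its body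
true (parameters evaluated in `M₀`, defined predicates in `I`) and making `(t₁,…,tₖ)`
evaluate to `d`.  (The order on interpretation tuples is componentwise inclusion,
i.e. the pointwise order on `(p : DP) → (Fin (arDP p) → M₀.carrier) → Prop`.) -/
def TD (D : Set (Rule Func arF PP arPP DP arDP)) (M₀ : PStruc Func arF PP arPP)
    (I : (p : DP) → (Fin (arDP p) → M₀.carrier) → Prop) :
    (p : DP) → (Fin (arDP p) → M₀.carrier) → Prop :=
  fun p d =>
    ∃ r ∈ D, ∃ σ : ℕ → M₀.carrier,
      (∀ b ∈ r.body, BodyAtom.holds (M₀.expand I) σ b) ∧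
      (⟨r.headPred, fun i => (r.headArgs i).eval (M₀.expand I) σ⟩ :
          (q : DP) × (Fin (arDP q) → M₀.carrier)) = ⟨p, d⟩


/-!
Among the expansions of `M₀`, the models of the rules of `D` are exactly the prefixed points
of `T_D` (those `I` with `T_D I ≤ I`). Hence `M₀.expand I ⊨_D D` says precisely that `I` is
the least prefixed point of the monotone operator `T_D`, which by Knaster–Tarski is its least
fixed point.
-/

namespace PStruc

abbrev Interp (M₀ : PStruc Func arF PP arPP) (arDP : DP → ℕ) : Type :=
  (p : DP) → (Fin (arDP p) → M₀.carrier) → Prop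

variable (M₀ : PStruc Func arF PP arPP)

theorem eval_expand (I J : M₀.Interp arDP) (σ : ℕ → M₀.carrier) (t : Term Func arF ℕ) :
    t.eval (M₀.expand I) σ = t.eval (M₀.expand J) σ := by
  induction t with
  | var v => rfl
  | func f args ih => exact congrArg (M₀.interpF f) (funext ih)

theorem bodyAtom_holds_expand_mono {I J : M₀.Interp arDP} (hIJ : I ≤ J) (σ : ℕ → M₀.carrier)
    {b : BodyAtom Func arF PP arPP DP arDP ℕ} (hb : b.holds (M₀.expand I) σ) :
    b.holds (M₀.expand J) σ := by
  cases b <;> simp only [BodyAtom.holds, M₀.eval_expand I J] at hb ⊢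
  case defAtom p args => exact hIJ p _ hb
  all_goals exact hb

end PStruc

section ImmediateConsequence

variable (D : Set (Rule Func arF PP arPP DP arDP)) (M₀ : PStruc Func arF PP arPP)

theorem monotone_TD : Monotone (TD D M₀) := by
  rintro I J hIJ p d ⟨r, hr, σ, hbody, hhead⟩
  refine ⟨r, hr, σ, fun b hb => M₀.bodyAtom_holds_expand_mono hIJ σ (hbody b hb), ?_⟩
  simpa only [M₀.eval_expand J I] using hhead

def TD.orderHom : M₀.Interp arDP →o M₀.Interp arDP :=
  ⟨TD D M₀, monotone_TD D M₀⟩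

theorem TD_le_iff_satRules (I : M₀.Interp arDP) :
    TD D M₀ I ≤ I ↔ SatRules (M₀.expand I) D := by
  constructor
  · intro h r hr σ hbody
    exact h r.headPred _ ⟨r, hr, σ, hbody, rfl⟩
  · rintro h p d ⟨r, hr, σ, hbody, hhead⟩
    obtain ⟨rfl, hd⟩ := Sigma.mk.inj_iff.mp hhead
    exact eq_of_heq hd ▸ h r hr σ hbody

theorem satDef_expand_iff_isLeast (I : M₀.Interp arDP) :
    SatDef D (M₀.expand I) ↔ IsLeast {J | TD D M₀ J ≤ J} I := by
  simp only [SatDef, IsLeast, lowerBounds, Set.mem_ofPred_eq, TD_le_iff_satRules]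
  -- the competitors `N` in `SatDef` are, definitionally, the expansions `M₀.expand J`
  rfl

theorem satDef_expand_iff_eq_lfp (I : M₀.Interp arDP) :
    SatDef D (M₀.expand I) ↔ I = OrderHom.lfp (TD.orderHom D M₀) := by
  rw [satDef_expand_iff_isLeast]
  exact ⟨fun h => h.unique (TD.orderHom D M₀).isLeast_lfp_le,
    fun h => h ▸ (TD.orderHom D M₀).isLeast_lfp_le⟩

end ImmediateConsequence

/-- the immediate consequence operator `T_D` is monotone w.r.t.
componentwise inclusion, and its least fixed point is exactly the tuple of
interpretations of the defined predicates in the unique expansion of `M₀` that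
satisfies `D` as a definition. -/
theorem statement_11 (D : Set (Rule Func arF PP arPP DP arDP))
    (M₀ : PStruc Func arF PP arPP) :
    Monotone (TD D M₀) ∧
    ∃ I : (p : DP) → (Fin (arDP p) → M₀.carrier) → Prop,
      SatDef D (M₀.expand I) ∧
      (∀ J, SatDef D (M₀.expand J) → J = I) ∧
      IsLeast (Function.fixedPoints (TD D M₀)) I :=
  ⟨monotone_TD D M₀, OrderHom.lfp (TD.orderHom D M₀),
    (satDef_expand_iff_eq_lfp D M₀ _).mpr rfl,
    fun J hJ => (satDef_expand_iff_eq_lfp D M₀ J).mp hJ,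
    (TD.orderHom D M₀).isLeast_lfp⟩
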